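/- Let Γ be an infinite cardinal and suppose T : ℓ_∞(Γ) → ℓ_∞(Γ) is a bounded operator whose kernel contains ℓ_∞^<(Γ) := {x ∈ ℓ_∞(Γ) : for every ε > 0, the set {γ : |x(γ)| > ε} has cardinality < Γ}. Then there exists an almost disjoint family 𝒜 ⊆ [Γ]^Γ of cardinality greater than Γ such that Y_𝒜 ⊆ ker T. In particular, ℓ_∞^<(Γ) is not the kernel of any bounded operator on ℓ_∞(Γ). -/

import Mathlib

open Cardinal Set

noncomputable def ind {Γ : Type*} (A : Set Γ) : lp (fun _ : Γ => ℝ) ⊤ :=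
  ⟨A.indicator 1, memℓp_infty ⟨1, by
    rintro r ⟨γ, rfl⟩
    by_cases h : γ ∈ A <;> simp [Set.indicator_apply, h]⟩⟩

def AlmostDisjoint {Γ : Type*} (𝒜 : Set (Set Γ)) : Prop :=
  (∀ A ∈ 𝒜, #A = #Γ) ∧ ∀ A ∈ 𝒜, ∀ B ∈ 𝒜, A ≠ B → #(↥(A ∩ B)) < #Γ

noncomputable def Ysub {Γ : Type*} (𝒜 : Set (Set Γ)) : Submodule ℝ (lp (fun _ : Γ => ℝ) ⊤) :=
  (Submodule.span ℝ
    {y | ∃ (n : ℕ) (A : Fin (n + 1) → Set Γ), (∀ i, A i ∈ 𝒜) ∧ y = ind (⋂ i, A i)}).topologicalClosure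

def Zgen {Γ : Type*} (𝒜 : Set (Set Γ)) : Set (lp (fun _ : Γ => ℝ) ⊤) :=
  {y | ∃ (n : ℕ) (A : Fin (n + 2) → Set Γ),
    (∀ i, A i ∈ 𝒜) ∧ Function.Injective A ∧ y = ind (⋂ i, A i)}

noncomputable def Zsub {Γ : Type*} (𝒜 : Set (Set Γ)) : Submodule ℝ (lp (fun _ : Γ => ℝ) ⊤) :=
  (Submodule.span ℝ (Zgen 𝒜)).topologicalClosure

/-- The subspace $\ell_\infty^{<}(\Gamma)$ of $\ell_\infty(\Gamma)$. -/
def ellLt (Γ : Type*) : Set (lp (fun _ : Γ => ℝ) ⊤) :=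
  {x | ∀ ε : ℝ, 0 < ε → #{γ : Γ | ε < |x γ|} < #Γ}

/-!
Sierpiński's almost disjoint family of size `> #Γ` is built from the graphs of a maximal family
of pairwise eventually different functions `Γ → Γ`. Fix a coordinate `γ`. Removing the pairwise
overlaps (which are small, so their indicators lie in `ellLt Γ ⊆ ker T`) makes finitely many
members disjoint without changing their images, and a signed sum of the disjoint indicators has
norm `≤ 1`; hence `∑ A, |T (ind A) γ| ≤ ‖T‖`. So only `#Γ` members have `T (ind A) ≠ 0`; the
others still form a family of size `> #Γ`, and `T` kills the indicator of every finite
intersection of them, which is either a member or meets two distinct members in a small set.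
Finally `ind A ∉ ellLt Γ` for a member `A`, so `ker T ≠ ellLt Γ`.
-/

local notation "ℓ∞(" Γ ")" => lp (fun _ : Γ => ℝ) ⊤

section Sierpinski

variable {Γ : Type*} [Infinite Γ]

theorem exists_forall_mk_setOf_eq_lt (F : Set (Γ → Γ)) (hF : #F ≤ #Γ) :
    ∃ g : Γ → Γ, ∀ f ∈ F, #{γ | f γ = g γ} < #Γ := by
  -- Enumerate `F` along a well-order of type `(#Γ).ord`; at `γ`, `g` avoids the values of the
  -- functions enumerated up to `γ`, so it agrees with the one enumerated at `ξ` only below `ξ`.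
  obtain ⟨_, _, hord⟩ := exists_ord_eq_type_lt Γ
  have mk_Iic_lt (γ : Γ) : #(Iic γ) < #Γ := by
    rw [← Iio_insert]
    exact mk_insert_le.trans_lt <| add_lt_of_lt (aleph0_le_mk Γ) (mk_Iio_lt γ hord)
      (one_lt_aleph0.trans_le (aleph0_le_mk Γ))
  obtain ⟨ι⟩ : Nonempty (F ↪ Γ) := hF
  have avoid_small (γ : Γ) : #((fun f : F => (f : Γ → Γ) γ) '' (ι ⁻¹' Iic γ)) < #Γ :=
    mk_image_le.trans_lt <| (mk_preimage_of_injective ι _ ι.injective).trans_lt (mk_Iic_lt γ)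
  choose g hg using fun γ => compl_nonempty_of_mk_lt_mk (avoid_small γ)
  refine ⟨g, fun f hf =>
    (mk_le_mk_of_subset fun γ hγ => ?_).trans_lt (mk_Iio_lt (ι ⟨f, hf⟩) hord)⟩
  by_contra hle
  exact hg γ ⟨⟨f, hf⟩, not_lt.1 hle, hγ⟩

theorem exists_pairwise_mk_setOf_eq_lt :
    ∃ F : Set (Γ → Γ), #Γ < #F ∧ F.Pairwise fun f g => #{γ | f γ = g γ} < #Γ := by
  obtain ⟨F, hF⟩ := zorn_subset {F : Set (Γ → Γ) | F.Pairwise fun f g => #{γ | f γ = g γ} < #Γ}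
    fun c hc hchain =>
      ⟨⋃₀ c, (pairwise_sUnion hchain.directedOn).2 hc, fun _ => subset_sUnion_of_mem⟩
  refine ⟨F, lt_of_not_ge fun hle => ?_, hF.prop⟩
  obtain ⟨g, hg⟩ := exists_forall_mk_setOf_eq_lt F hle
  have hgF : g ∉ F := fun hgF => (hg g hgF).ne (by simp)
  have hins : (insert g F).Pairwise fun f g => #{γ | f γ = g γ} < #Γ :=
    hF.prop.insert fun f hf _ => ⟨by simpa only [eq_comm] using hg f hf, hg f hf⟩
  exact hgF (hF.2 hins (subset_insert g F) (mem_insert g F))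

theorem exists_almostDisjoint_lt_mk : ∃ 𝒜 : Set (Set Γ), AlmostDisjoint 𝒜 ∧ #Γ < #𝒜 := by
  obtain ⟨F, hFbig, hF⟩ := exists_pairwise_mk_setOf_eq_lt (Γ := Γ)
  obtain ⟨e⟩ : Nonempty (Γ × Γ ≃ Γ) := Cardinal.eq.1 <| by simp [mul_eq_self (aleph0_le_mk Γ)]
  let graph (f : Γ → Γ) (γ : Γ) : Γ := e (γ, f γ)
  have graph_injective (f : Γ → Γ) : Function.Injective (graph f) := fun γ δ h =>
    congrArg Prod.fst (e.injective h)
  have inter_subset (f g : Γ → Γ) :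
      range (graph f) ∩ range (graph g) ⊆ graph f '' {γ | f γ = g γ} := by
    rintro _ ⟨⟨γ, rfl⟩, δ, h⟩
    obtain ⟨rfl, h⟩ := Prod.ext_iff.1 (e.injective h)
    exact ⟨δ, h.symm, rfl⟩
  have mk_inter_lt : F.Pairwise fun f g => #(range (graph f) ∩ range (graph g) : Set Γ) < #Γ :=
    fun f hf g hg hfg => (mk_le_mk_of_subset (inter_subset f g)).trans_lt
      (mk_image_le.trans_lt (hF hf hg hfg))
  have injOn : InjOn (fun f => range (graph f)) F := fun f hf g hg (h : range _ = range _) => by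
    by_contra hfg
    have : #(range (graph f) ∩ range (graph g) : Set Γ) < #Γ := mk_inter_lt hf hg hfg
    rw [h, inter_self, mk_range_eq _ (graph_injective g)] at this
    exact this.false
  refine ⟨(fun f => range (graph f)) '' F, ⟨?_, ?_⟩, by rwa [mk_image_eq_of_injOn _ _ injOn]⟩
  · rintro _ ⟨f, -, rfl⟩
    exact mk_range_eq _ (graph_injective f)
  · rintro _ ⟨f, hf, rfl⟩ _ ⟨g, hg, rfl⟩ hne
    exact mk_inter_lt hf hg fun h => hne (h ▸ rfl)

end Sierpinski

section Operator

variable {Γ : Type*}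

theorem ind_apply (A : Set Γ) (γ : Γ) : ind A γ = A.indicator 1 γ := rfl

theorem ind_mem_ellLt_iff {A : Set Γ} : ind A ∈ ellLt Γ ↔ #A < #Γ := by
  refine ⟨fun h => ?_, fun h ε hε => (mk_le_mk_of_subset fun γ hγ => ?_).trans_lt h⟩
  · convert h 2⁻¹ (by norm_num) using 3
    ext γ
    by_cases hγ : γ ∈ A <;> norm_num [ind_apply, hγ]
  · by_contra hγA
    simp [ind_apply, hγA, hε.not_gt] at hγ

theorem ind_mem_Ysub {𝒜 : Set (Set Γ)} {A : Set Γ} (hA : A ∈ 𝒜) : ind A ∈ Ysub 𝒜 :=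
  Submodule.le_topologicalClosure _ <| Submodule.subset_span
    ⟨0, fun _ => A, fun _ => hA, by rw [iInter_const]⟩

theorem mk_biUnion_lt [Infinite Γ] {ι : Type*} (s : Finset ι) (A : ι → Set Γ)
    (h : ∀ i ∈ s, #(A i) < #Γ) : #(⋃ i ∈ s, A i) < #Γ := by
  classical
  induction s using Finset.induction_on with
  | empty => simpa using aleph0_pos.trans_le (aleph0_le_mk Γ)
  | insert a s _ ih =>
    rw [Finset.set_biUnion_insert]
    exact (mk_union_le _ _).trans_lt <| add_lt_of_lt (aleph0_le_mk Γ)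
      (h a (s.mem_insert_self a)) (ih fun i hi => h i (Finset.mem_insert_of_mem hi))

theorem norm_sum_smul_ind_le {ι : Type*} (s : Finset ι) (D : ι → Set Γ)
    (hD : (s : Set ι).PairwiseDisjoint D) (c : ι → ℝ) (hc : ∀ i, |c i| ≤ 1) :
    ‖∑ i ∈ s, c i • ind (D i)‖ ≤ 1 := by
  refine lp.norm_le_of_forall_le zero_le_one fun γ => ?_
  rw [lp.coeFn_sum, Finset.sum_apply, Real.norm_eq_abs]
  calc |∑ i ∈ s, ((c i • ind (D i) : ℓ∞(Γ)) : Γ → ℝ) γ|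
      ≤ ∑ i ∈ s, (D i).indicator 1 γ := by
        refine (Finset.abs_sum_le_sum_abs _ _).trans (Finset.sum_le_sum fun i _ => ?_)
        rw [lp.coeFn_smul, Pi.smul_apply, smul_eq_mul, abs_mul, ind_apply]
        exact (mul_le_of_le_one_left (abs_nonneg _) (hc i)).trans_eq
          (abs_of_nonneg (indicator_nonneg (fun _ _ => zero_le_one) γ))
    _ = (⋃ i ∈ s, D i).indicator 1 γ := (Finset.indicator_biUnion_apply s D hD γ).symm
    _ ≤ 1 := by by_cases hγ : γ ∈ ⋃ i ∈ s, D i <;> simp [hγ]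

variable (T : ℓ∞(Γ) →L[ℝ] ℓ∞(Γ)) (hker : ∀ x ∈ ellLt Γ, T x = 0)
include hker

theorem apply_ind_sdiff {A U : Set Γ} (h : #(A ∩ U : Set Γ) < #Γ) :
    T (ind (A \ U)) = T (ind A) := by
  have : ind A = ind (A \ U) + ind (A ∩ U) := by
    ext γ
    by_cases hA : γ ∈ A <;> by_cases hU : γ ∈ U <;> simp [ind_apply, hA, hU]
  rw [this, map_add, hker _ (ind_mem_ellLt_iff.2 h), add_zero]

theorem sum_abs_apply_ind_le_opNorm [Infinite Γ] (t : Finset (Set Γ))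
    (ht : (t : Set (Set Γ)).Pairwise fun A B => #(A ∩ B : Set Γ) < #Γ) (γ : Γ) :
    ∑ A ∈ t, |T (ind A) γ| ≤ ‖T‖ := by
  classical
  let D (A : Set Γ) : Set Γ := A \ ⋃ B ∈ t.erase A, B
  have hD : (t : Set (Set Γ)).PairwiseDisjoint D := fun A hA B _ hAB =>
    disjoint_left.2 fun δ hδA hδB => hδB.2 (mem_biUnion (Finset.mem_erase.2 ⟨hAB, hA⟩) hδA.1)
  have hTD (A) (hA : A ∈ t) : T (ind (D A)) = T (ind A) := by
    refine apply_ind_sdiff T hker ?_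
    rw [inter_iUnion₂]
    exact mk_biUnion_lt _ _ fun B hB =>
      ht hA (Finset.mem_of_mem_erase hB) (Finset.ne_of_mem_erase hB).symm
  let x : ℓ∞(Γ) := ∑ A ∈ t, (SignType.sign (T (ind A) γ) : ℝ) • ind (D A)
  have hx : ‖x‖ ≤ 1 := norm_sum_smul_ind_le t D hD _ fun A => by
    rcases SignType.sign (T (ind A) γ) with _ | _ | _ <;> simp
  have hTx : T x = ∑ A ∈ t, (SignType.sign (T (ind A) γ) : ℝ) • T (ind A) := by
    simp only [x, map_sum, map_smul]
    exact Finset.sum_congr rfl fun A hA => by rw [hTD A hA]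
  calc ∑ A ∈ t, |T (ind A) γ| = T x γ := by
        rw [hTx, lp.coeFn_sum, Finset.sum_apply]
        exact Finset.sum_congr rfl fun A _ => by
          rw [lp.coeFn_smul, Pi.smul_apply, smul_eq_mul, sign_mul_self]
    _ ≤ ‖T x‖ := (le_abs_self _).trans <| by
        simpa using lp.norm_apply_le_norm ENNReal.top_ne_zero (T x) γ
    _ ≤ ‖T‖ * ‖x‖ := T.le_opNorm x
    _ ≤ ‖T‖ := mul_le_of_le_one_right (norm_nonneg T) hx

theorem countable_setOf_apply_ind_ne_zero [Infinite Γ] {𝒜 : Set (Set Γ)}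
    (h𝒜 : 𝒜.Pairwise fun A B => #(A ∩ B : Set Γ) < #Γ) (γ : Γ) :
    {A ∈ 𝒜 | T (ind A) γ ≠ 0}.Countable := by
  classical
  have : Summable (𝒜.indicator fun A => |T (ind A) γ|) :=
    summable_of_sum_le (indicator_nonneg fun _ _ => abs_nonneg _) fun u => by
      rw [Finset.sum_indicator_eq_sum_filter]
      exact sum_abs_apply_ind_le_opNorm T hker _
        (h𝒜.mono fun A hA => (Finset.mem_filter.1 hA).2) γ
  simpa [support_indicator, Function.support] using this.countable_support

theorem mk_setOf_apply_ind_ne_zero_le [Infinite Γ] {𝒜 : Set (Set Γ)}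
    (h𝒜 : 𝒜.Pairwise fun A B => #(A ∩ B : Set Γ) < #Γ) :
    #{A ∈ 𝒜 | T (ind A) ≠ 0} ≤ #Γ := by
  have : {A ∈ 𝒜 | T (ind A) ≠ 0} = ⋃ γ, {A ∈ 𝒜 | T (ind A) γ ≠ 0} := by
    ext A
    have : T (ind A) ≠ 0 ↔ ∃ γ, T (ind A) γ ≠ 0 := by
      rw [Ne, lp.ext_iff, lp.coeFn_zero]
      exact Function.ne_iff
    simp [this]
  calc #{A ∈ 𝒜 | T (ind A) ≠ 0} ≤ #Γ * ⨆ γ, #{A ∈ 𝒜 | T (ind A) γ ≠ 0} :=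
        this ▸ mk_iUnion_le _
    _ ≤ #Γ * ℵ₀ := by
        gcongr
        exact ciSup_le' fun γ =>
          le_aleph0_iff_set_countable.2 (countable_setOf_apply_ind_ne_zero T hker h𝒜 γ)
    _ = #Γ := mul_aleph0_eq (aleph0_le_mk Γ)

theorem Ysub_le_ker {𝒜 : Set (Set Γ)} (h𝒜 : 𝒜.Pairwise fun A B => #(A ∩ B : Set Γ) < #Γ)
    (hT : ∀ A ∈ 𝒜, T (ind A) = 0) : Ysub 𝒜 ≤ LinearMap.ker (T : ℓ∞(Γ) →ₗ[ℝ] ℓ∞(Γ)) := by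
  refine Submodule.topologicalClosure_minimal _ (Submodule.span_le.2 ?_) T.isClosed_ker
  rintro _ ⟨n, A, hA, rfl⟩
  by_cases hconst : ∀ i, A i = A 0
  · rw [show A = fun _ => A 0 from funext hconst, iInter_const]
    exact hT _ (hA 0)
  · push Not at hconst
    obtain ⟨i, hi⟩ := hconst
    refine hker _ (ind_mem_ellLt_iff.2 ?_)
    exact (mk_le_mk_of_subset (subset_inter (iInter_subset A i) (iInter_subset A 0))).trans_lt
      (h𝒜 (hA i) (hA 0) hi)

theorem exists_almostDisjoint_Ysub_le_ker [Infinite Γ] :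
    ∃ 𝒜 : Set (Set Γ), AlmostDisjoint 𝒜 ∧ #Γ < #𝒜 ∧
      Ysub 𝒜 ≤ LinearMap.ker (T : ℓ∞(Γ) →ₗ[ℝ] ℓ∞(Γ)) := by
  obtain ⟨𝒜, h𝒜, hbig⟩ := exists_almostDisjoint_lt_mk (Γ := Γ)
  let 𝒜₀ := {A ∈ 𝒜 | T (ind A) = 0}
  have h𝒜₀ : AlmostDisjoint 𝒜₀ :=
    ⟨fun A hA => h𝒜.1 A hA.1, fun A hA B hB => h𝒜.2 A hA.1 B hB.1⟩
  refine ⟨𝒜₀, h𝒜₀, lt_of_not_ge fun hsmall => hbig.not_ge ?_,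
    Ysub_le_ker T hker h𝒜₀.2 fun A hA => hA.2⟩
  calc #𝒜 ≤ #(𝒜₀ ∪ {A ∈ 𝒜 | T (ind A) ≠ 0} : Set (Set Γ)) :=
        mk_le_mk_of_subset fun A hA => (em _).imp (⟨hA, ·⟩) (⟨hA, ·⟩)
    _ ≤ #Γ + #Γ :=
        (mk_union_le _ _).trans (add_le_add hsmall (mk_setOf_apply_ind_ne_zero_le T hker h𝒜.2))
    _ = #Γ := add_eq_self (aleph0_le_mk Γ)

end Operator

theorem kernel_containing_ellLt_contains_Ysub {Γ : Type*} [Infinite Γ]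
    (T : lp (fun _ : Γ => ℝ) ⊤ →L[ℝ] lp (fun _ : Γ => ℝ) ⊤)
    (hker : ∀ x ∈ ellLt Γ, T x = 0) :
    (∃ 𝒜 : Set (Set Γ), AlmostDisjoint 𝒜 ∧ #Γ < #𝒜 ∧ ∀ y ∈ Ysub 𝒜, T y = 0) ∧
    ∀ S : lp (fun _ : Γ => ℝ) ⊤ →L[ℝ] lp (fun _ : Γ => ℝ) ⊤,
      (LinearMap.ker (S : lp (fun _ : Γ => ℝ) ⊤ →ₗ[ℝ] lp (fun _ : Γ => ℝ) ⊤) : Set (lp (fun _ : Γ => ℝ) ⊤)) ≠ ellLt Γ := by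
  refine ⟨?_, fun S hS => ?_⟩
  · obtain ⟨𝒜, h𝒜, hbig, hY⟩ := exists_almostDisjoint_Ysub_le_ker T hker
    exact ⟨𝒜, h𝒜, hbig, fun y hy => hY hy⟩
  · obtain ⟨𝒜, h𝒜, hbig, hY⟩ := exists_almostDisjoint_Ysub_le_ker S fun x hx => by
      rw [← hS] at hx
      exact hx
    obtain ⟨A, hA⟩ : 𝒜.Nonempty := nonempty_coe_sort.1 <| mk_ne_zero_iff.1 (pos_of_gt hbig).ne'
    have : ind A ∈ ellLt Γ := hS ▸ hY (ind_mem_Ysub hA)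
    exact (ind_mem_ellLt_iff.1 this).ne (h𝒜.1 A hA)
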